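/- arXiv:2102.13639 — 3 statements merged into one kernel-verified Lean document; each statement's English description precedes it below -/
import Mathlib

section
/- For the natural representation V of G(4,2,2), the dual V^∨ is isomorphic as a G-representation to V ⊗ χ₂, where χ₂(i^a,i^b,σ^c)=i^{a+b}. -/
open Complex

/-- `μ₄`-pairs with even exponent sum: `K = {(i^a, i^b) : a + b ≡ 0 mod 2}`,
realized as the subgroup of `ℂˣ × ℂˣ` of pairs of fourth roots of unity whose
product is a square root of unity. -/
def Kgrp : Subgroup (ℂˣ × ℂˣ) where
  carrier := {p | (p.1 : ℂ) ^ 4 = 1 ∧ (p.2 : ℂ) ^ 4 = 1 ∧ ((p.1 : ℂ) * (p.2 : ℂ)) ^ 2 = 1}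
  one_mem' := by simp
  mul_mem' := by
    rintro a b ⟨ha1, ha2, ha3⟩ ⟨hb1, hb2, hb3⟩
    refine ⟨?_, ?_, ?_⟩
    · rw [Prod.fst_mul, Units.val_mul, mul_pow, ha1, hb1, one_mul]
    · rw [Prod.snd_mul, Units.val_mul, mul_pow, ha2, hb2, one_mul]
    · rw [Prod.fst_mul, Prod.snd_mul, Units.val_mul, Units.val_mul,
        mul_mul_mul_comm, mul_pow, ha3, hb3, one_mul]
  inv_mem' := by
    rintro a ⟨h1, h2, h3⟩
    refine ⟨?_, ?_, ?_⟩
    · rw [Prod.fst_inv, Units.val_inv_eq_inv_val, inv_pow, h1, inv_one]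
    · rw [Prod.snd_inv, Units.val_inv_eq_inv_val, inv_pow, h2, inv_one]
    · rw [Prod.fst_inv, Prod.snd_inv, Units.val_inv_eq_inv_val,
        Units.val_inv_eq_inv_val, ← mul_inv, inv_pow, h3, inv_one]

/-- The coordinate swap as an automorphism of `K`. -/
def swapAut : MulAut Kgrp where
  toFun p := ⟨(p.1.2, p.1.1), p.2.2.1, p.2.1, by rw [mul_comm]; exact p.2.2.2⟩
  invFun p := ⟨(p.1.2, p.1.1), p.2.2.1, p.2.1, by rw [mul_comm]; exact p.2.2.2⟩
  left_inv p := rfl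
  right_inv p := rfl
  map_mul' p q := rfl

/-- The `S₂ = {±1}`-action on `K` by swapping coordinates. -/
noncomputable def sw : ℤˣ →* MulAut Kgrp where
  toFun c := if c = 1 then 1 else swapAut
  map_one' := by simp
  map_mul' c d := by
    have hs : swapAut * swapAut = 1 := MulEquiv.ext fun x => rfl
    rcases Int.units_eq_one_or c with hc | hc <;>
      rcases Int.units_eq_one_or d with hd | hd <;>
        subst hc <;> subst hd <;> simp [hs]

/-- The complex reflection group `G(4,2,2) = K ⋊ S₂`. -/
abbrev G422 : Type := Kgrp ⋊[sw] ℤˣ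

/-- The element `(i^a, i^b, σ^c)` of `G(4,2,2)`. -/
noncomputable def elG (u v : ℂˣ) (h : (u, v) ∈ Kgrp) (c : ℤˣ) : G422 :=
  ⟨⟨(u, v), h⟩, c⟩

lemma mem_Kgrp_neg_one_neg_one : ((-1 : ℂˣ), (-1 : ℂˣ)) ∈ Kgrp := by
  refine ⟨?_, ?_, ?_⟩ <;> norm_num

/-- The central element `(-1, -1, 1)`. -/
noncomputable def cenG : G422 := elG (-1) (-1) mem_Kgrp_neg_one_neg_one 1

lemma mem_Kgrp_one_neg_one : ((1 : ℂˣ), (-1 : ℂˣ)) ∈ Kgrp := by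
  refine ⟨?_, ?_, ?_⟩ <;> norm_num

lemma mem_Kgrp_neg_one_one : ((-1 : ℂˣ), (1 : ℂˣ)) ∈ Kgrp := by
  refine ⟨?_, ?_, ?_⟩ <;> norm_num

lemma mem_Kgrp_one_one : ((1 : ℂˣ), (1 : ℂˣ)) ∈ Kgrp := by
  refine ⟨?_, ?_, ?_⟩ <;> norm_num

/-- `i` as a unit of `ℂ`. -/
noncomputable def uI : ℂˣ := Units.mk0 Complex.I Complex.I_ne_zero

lemma mem_Kgrp_uI_uI : (uI, uI) ∈ Kgrp := by
  refine ⟨?_, ?_, ?_⟩ <;> simp [uI] <;> norm_num [pow_succ, Complex.I_mul_I]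

lemma mem_Kgrp_uI_neg_uI : (uI, -uI) ∈ Kgrp := by
  refine ⟨?_, ?_, ?_⟩ <;> simp [uI] <;> norm_num [pow_succ, Complex.I_mul_I]

/-- The matrix of the natural 2-dimensional representation of `G(4,2,2)` on `ℂ²`:
`(i^a, i^b)` acts diagonally and `σ` swaps the coordinates. -/
noncomputable def mval (g : G422) : Matrix (Fin 2) (Fin 2) ℂ :=
  if g.right = 1 then !![(g.left.1.1 : ℂ), 0; 0, (g.left.1.2 : ℂ)]
  else !![0, (g.left.1.1 : ℂ); (g.left.1.2 : ℂ), 0]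

lemma neg_one_ne_one_int_units : (-1 : ℤˣ) ≠ 1 := by decide

/-- The natural representation as a monoid homomorphism into `2 × 2` matrices. -/
noncomputable def mvalHom : G422 →* Matrix (Fin 2) (Fin 2) ℂ where
  toFun := mval
  map_one' := by
    simp [mval, Matrix.one_fin_two]
  map_mul' a b := by
    rcases Int.units_eq_one_or a.right with hc | hc <;>
      rcases Int.units_eq_one_or b.right with hd | hd <;>
        simp [mval, SemidirectProduct.mul_left, SemidirectProduct.mul_right, sw, swapAut,
          hc, hd, neg_one_ne_one_int_units, Matrix.mul_fin_two]

/-- The natural representation `V` of `G(4,2,2)` on `ℂ²`. -/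
noncomputable def rhoV : Representation ℂ G422 (Fin 2 → ℂ) where
  toFun g := Matrix.toLin' (mvalHom g)
  map_one' := by simp [Module.End.one_eq_id]
  map_mul' g h := by
    simp [Matrix.toLin'_mul, Module.End.mul_eq_comp]

/-- The character `χ₂(i^a, i^b, σ^c) = i^{a+b}` of `G(4,2,2)`. -/
noncomputable def chi2 : G422 →* ℂˣ where
  toFun g := g.left.1.1 * g.left.1.2
  map_one' := by simp
  map_mul' a b := by
    rcases Int.units_eq_one_or a.right with hc | hc <;>
      simp [SemidirectProduct.mul_left, sw, swapAut, hc, neg_one_ne_one_int_units,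
        mul_mul_mul_comm, mul_comm, mul_left_comm]

/-- The character `χ₃(i^a, i^b, σ^c) = i^{a-b}` of `G(4,2,2)`. -/
noncomputable def chi3 : G422 →* ℂˣ where
  toFun g := g.left.1.1 * (g.left.1.2)⁻¹
  map_one' := by simp
  map_mul' a b := by
    have key : (b.left.1.1 : ℂˣ) * (b.left.1.2)⁻¹ = (b.left.1.2) * (b.left.1.1)⁻¹ := by
      obtain ⟨h1, h2, h3⟩ := b.left.2
      have hne1 : ((b.left.1.1 : ℂˣ) : ℂ) ≠ 0 := Units.ne_zero _
      have hne2 : ((b.left.1.2 : ℂˣ) : ℂ) ≠ 0 := Units.ne_zero _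
      have h22 : ((b.left.1.1 : ℂˣ) : ℂ) ^ 2 = ((b.left.1.2 : ℂˣ) : ℂ) ^ 2 := by
        have hmul : ((b.left.1.1 : ℂˣ) : ℂ) ^ 2 * ((b.left.1.2 : ℂˣ) : ℂ) ^ 2 = 1 := by
          rw [← mul_pow]; exact h3
        have := mul_left_cancel₀ (pow_ne_zero 2 hne1)
          (show ((b.left.1.1 : ℂˣ) : ℂ) ^ 2 * ((b.left.1.1 : ℂˣ) : ℂ) ^ 2 =
              ((b.left.1.1 : ℂˣ) : ℂ) ^ 2 * ((b.left.1.2 : ℂˣ) : ℂ) ^ 2 by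
            rw [hmul, ← pow_add]; exact h1)
        exact this
      rw [Units.ext_iff]
      push_cast
      field_simp
      linear_combination h22
    rcases Int.units_eq_one_or a.right with hc | hc
    · simp [SemidirectProduct.mul_left, sw, hc, mul_inv, mul_comm, mul_left_comm, mul_assoc]
    · simp only [SemidirectProduct.mul_left, sw, hc, MonoidHom.coe_mk, OneHom.coe_mk,
        if_neg neg_one_ne_one_int_units]
      show a.left.1.1 * b.left.1.2 * (a.left.1.2 * b.left.1.1)⁻¹ =
        a.left.1.1 * (a.left.1.2)⁻¹ * (b.left.1.1 * (b.left.1.2)⁻¹)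
      rw [key]
      simp [mul_inv, mul_comm, mul_left_comm, mul_assoc]

/-- The character `χ₄(i^a, i^b, σ^c) = sgn(σ^c)` of `G(4,2,2)`. -/
noncomputable def chi4 : G422 →* ℂˣ :=
  (Units.map (Int.castRingHom ℂ).toMonoidHom).comp SemidirectProduct.rightHom

/-! The form `x₀y₁ + x₁y₀` on `V` is nondegenerate and every `g` rescales it by `χ₂(g)`,
since the matrix of `g` is monomial with nonzero entries whose product is `χ₂(g)`. A form that
is semi-invariant with multiplier `χ` identifies `V^∨` with `V ⊗ χ⁻¹`, and `χ₂⁻¹ = χ₂` because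
`χ₂` takes the values `±1`. -/

namespace Representation

variable {k G V : Type*} [Field k] [Group G] [AddCommGroup V] [Module k V]
  [FiniteDimensional k V]

theorem toDual_symm_dual_apply (ρ : Representation k G V) (χ : G →* k)
    (B : LinearMap.BilinForm k V) (hB : B.Nondegenerate)
    (hρ : ∀ g x y, B (ρ g x) (ρ g y) = χ g * B x y) (g : G) (f : Module.Dual k V) :
    (B.toDual hB).symm (ρ.dual g f) = χ g⁻¹ • ρ g ((B.toDual hB).symm f) := by
  apply (B.toDual hB).injective
  ext x
  have hx : B (ρ g ((B.toDual hB).symm f)) x = χ g * f (ρ g⁻¹ x) := by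
    simpa [← Module.End.mul_apply, ← map_mul] using hρ g ((B.toDual hB).symm f) (ρ g⁻¹ x)
  have hχ : χ g⁻¹ * χ g = 1 := by rw [← map_mul, inv_mul_cancel, map_one]
  rw [LinearEquiv.apply_symm_apply, map_smul, LinearMap.smul_apply,
    LinearMap.BilinForm.toDual_def, hx, smul_eq_mul, ← mul_assoc, hχ, one_mul, dual_apply,
    Module.Dual.transpose_apply, LinearMap.comp_apply]

end Representation

lemma chi2_inv (g : G422) : chi2 g⁻¹ = chi2 g := by
  rw [map_inv, inv_eq_iff_mul_eq_one, ← sq, Units.ext_iff]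
  exact g.left.2.2.2

noncomputable def swapForm : LinearMap.BilinForm ℂ (Fin 2 → ℂ) :=
  Matrix.toBilin' !![0, 1; 1, 0]

lemma swapForm_nondegenerate : swapForm.Nondegenerate :=
  LinearMap.BilinForm.nondegenerate_toBilin'_of_det_ne_zero' _ (by simp)

open Matrix in
lemma mval_transpose_mul_mul_self (g : G422) :
    (mval g)ᵀ * !![0, 1; 1, 0] * mval g = ((chi2 g : ℂˣ) : ℂ) • !![0, 1; 1, 0] := by
  ext i j
  rcases Int.units_eq_one_or g.right with hc | hc <;>
    fin_cases i <;> fin_cases j <;> simp [mval, hc, chi2, Matrix.mul_apply, mul_comm]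

lemma swapForm_rhoV (g : G422) (x y : Fin 2 → ℂ) :
    swapForm (rhoV g x) (rhoV g y) = ((chi2 g : ℂˣ) : ℂ) * swapForm x y := by
  rw [swapForm, ← LinearMap.BilinForm.comp_apply, show rhoV g = Matrix.toLin' (mval g) from rfl,
    Matrix.toBilin'_comp, mval_transpose_mul_mul_self, map_smul]
  rfl

/-- The dual of the natural representation of `G(4,2,2)` is isomorphic to `V ⊗ χ₂`,
i.e. there is a linear equivalence `V^∨ ≃ V` twisting the action by `χ₂`. -/
theorem dual_eq_V_tensor_chi2 :
    ∃ e : Module.Dual ℂ (Fin 2 → ℂ) ≃ₗ[ℂ] (Fin 2 → ℂ),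
      ∀ (g : G422) (f : Module.Dual ℂ (Fin 2 → ℂ)),
        e (rhoV.dual g f) = ((chi2 g : ℂˣ) : ℂ) • rhoV g (e f) := by
  refine ⟨(swapForm.toDual swapForm_nondegenerate).symm, fun g f => ?_⟩
  rw [rhoV.toDual_symm_dual_apply ((Units.coeHom ℂ).comp chi2) _ _ swapForm_rhoV]
  simp [chi2_inv]
end

section
/- Let E = ℂ/ℤ[i] and let G = G(4,2,2) act on A = E² where the generators act by the matrices α = [[-1, 1+i],[0,1]], β = [[-i, i-1],[0,i]], γ = [[-1,0],[i-1,1]] (entries in ℤ[i], acting on ℂ² descending to E²). Then the fixed locus of γ in A is {(x,y) ∈ A : x = ix}, i.e., {e, t₀} × E where t₀ is the unique nonzero i-invariant point of E, so A^γ is isomorphic to a disjoint union of two copies of E. -/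
open Complex

/-- The Gaussian lattice `ℤ[i] ⊂ ℂ` as an additive subgroup (generated by `1` and `i`). -/
noncomputable def Lambda : AddSubgroup ℂ := AddSubgroup.closure {1, Complex.I}

/-- The elliptic curve `E = ℂ/ℤ[i]`. -/
abbrev EC : Type := ℂ ⧸ Lambda

/-- The projection `ℂ → E`. -/
noncomputable def piE (z : ℂ) : EC := QuotientAddGroup.mk z

lemma mulI_maps : Lambda ≤ Lambda.comap (AddMonoidHom.mulLeft Complex.I) := by
  rw [Lambda, AddSubgroup.closure_le]
  rintro z hz
  simp only [Set.mem_insert_iff, Set.mem_singleton_iff] at hz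
  have hI : Complex.I ∈ Lambda :=
    AddSubgroup.subset_closure (by simp : Complex.I ∈ ({1, Complex.I} : Set ℂ))
  have h1 : (1 : ℂ) ∈ Lambda :=
    AddSubgroup.subset_closure (by simp : (1 : ℂ) ∈ ({1, Complex.I} : Set ℂ))
  rcases hz with rfl | rfl
  · simpa [Lambda] using hI
  · have : (-1 : ℂ) ∈ Lambda := neg_mem h1
    simpa [Complex.I_mul_I, Lambda] using this

/-- Multiplication by `i` descends to `E = ℂ/ℤ[i]`. -/
noncomputable def mulIE : EC →+ EC :=
  QuotientAddGroup.map Lambda Lambda (AddMonoidHom.mulLeft Complex.I) mulI_maps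

/-- The automorphism `γ = [[-1, 0], [i-1, 1]]` of `A = E²` (one of the three
generators of the `G(4,2,2)`-action on `A` of Type (C)):
`(x, y) ↦ (-x, (i-1)x + y)`. -/
noncomputable def gammaA (p : EC × EC) : EC × EC := (-p.1, mulIE p.1 - p.1 + p.2)

/- The fixed points of `γ` are the `p` with `i p.1 = p.1`, the `p.2`-coordinate being free: for
such `p.1`, `-p.1 = i (i p.1) = p.1`. A point `z mod ℤ[i]` is fixed by `i` exactly when
`(i - 1) z ∈ ℤ[i]`; writing `(i - 1) z = m + n i`, the parity of `m + n` decides whether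
`z ≡ 0` or `z ≡ (1 + i)/2`. -/

lemma mem_Lambda_iff {z : ℂ} : z ∈ Lambda ↔ ∃ m n : ℤ, z = m + n * I := by
  simp only [Lambda, AddSubgroup.mem_closure_pair, zsmul_eq_mul, mul_one, eq_comm]

lemma I_sub_one_mul_mem_Lambda {w : ℂ} (hw : w ∈ Lambda) : (I - 1) * w ∈ Lambda := by
  rw [sub_mul, one_mul]
  exact sub_mem (mulI_maps hw) hw

lemma one_mem_Lambda : (1 : ℂ) ∈ Lambda :=
  AddSubgroup.subset_closure (by simp)

lemma half_one_add_I_notMem_Lambda : (1 + I) / 2 ∉ Lambda := by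
  rw [mem_Lambda_iff]
  rintro ⟨m, n, h⟩
  have hre : (1 / 2 : ℝ) = m := by simpa using congrArg re h
  have : (1 : ℤ) = 2 * m := by exact_mod_cast (by linarith : (1 : ℝ) = 2 * m)
  omega

lemma I_sub_one_mul_mem_Lambda_iff {z : ℂ} :
    (I - 1) * z ∈ Lambda ↔ z ∈ Lambda ∨ z - (1 + I) / 2 ∈ Lambda := by
  constructor
  · rw [mem_Lambda_iff, mem_Lambda_iff, mem_Lambda_iff]
    rintro ⟨m, n, h⟩
    have hI : (I - 1 : ℂ) ≠ 0 := sub_ne_zero.mpr fun h => by simpa using congrArg im h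
    obtain ⟨k, hk | hk⟩ := Int.even_or_odd' (m + n)
    · have hk' : (m : ℂ) + n = 2 * k := by exact_mod_cast hk
      refine .inl ⟨k - m, -k, mul_left_cancel₀ hI ?_⟩
      push_cast
      linear_combination h + I * hk' + (k : ℂ) * I_sq
    · have hk' : (m : ℂ) + n = 2 * k + 1 := by exact_mod_cast hk
      refine .inr ⟨k - m, -(k + 1), mul_left_cancel₀ hI ?_⟩
      push_cast
      linear_combination h + I * hk' + (k + 1 / 2 : ℂ) * I_sq
  · rintro (hz | hz)
    · exact I_sub_one_mul_mem_Lambda hz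
    · have h : (I - 1) * z = (I - 1) * (z - (1 + I) / 2) - 1 := by
        linear_combination (1 / 2 : ℂ) * I_sq
      rw [h]
      exact sub_mem (I_sub_one_mul_mem_Lambda hz) one_mem_Lambda

lemma piE_eq_piE_iff {a b : ℂ} : piE a = piE b ↔ a - b ∈ Lambda :=
  QuotientAddGroup.eq_iff_sub_mem

lemma mulIE_piE (z : ℂ) : mulIE (piE z) = piE (I * z) := rfl

lemma mulIE_mulIE (x : EC) : mulIE (mulIE x) = -x := by
  induction x using QuotientAddGroup.induction_on with
  | H z =>
    change mulIE (mulIE (piE z)) = -piE z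
    rw [mulIE_piE, mulIE_piE, ← mul_assoc, I_mul_I, neg_one_mul]
    rfl

lemma mulIE_eq_self_iff (x : EC) :
    mulIE x = x ↔ x = piE 0 ∨ x = piE ((1 + I) / 2) := by
  induction x using QuotientAddGroup.induction_on with
  | H z =>
    change mulIE (piE z) = piE z ↔ piE z = piE 0 ∨ piE z = piE ((1 + I) / 2)
    rw [mulIE_piE, piE_eq_piE_iff, piE_eq_piE_iff, piE_eq_piE_iff, sub_zero, ← sub_one_mul]
    exact I_sub_one_mul_mem_Lambda_iff

lemma gammaA_eq_self_iff (p : EC × EC) : gammaA p = p ↔ mulIE p.1 = p.1 := by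
  simp only [gammaA, Prod.ext_iff, add_eq_right, sub_eq_zero, and_iff_right_iff_imp]
  intro h
  rw [← mulIE_mulIE, h, h]

def subtypeFstEqOrEqEquivSum {α β : Type*} [DecidableEq α] {a b : α} (hab : a ≠ b) :
    {p : α × β // p.1 = a ∨ p.1 = b} ≃ β ⊕ β :=
  have hdisj : Disjoint (fun p : α × β => p.1 = a) (fun p => p.1 = b) :=
    Pi.disjoint_iff.2 fun _ => Prop.disjoint_iff.2 fun ⟨ha, hb⟩ => hab (ha ▸ hb)
  (subtypeOrEquiv _ _ hdisj).trans <| Equiv.sumCongr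
    ((Equiv.prodSubtypeFstEquivSubtypeProd (p := (· = a))).trans (Equiv.uniqueProd _ _))
    ((Equiv.prodSubtypeFstEquivSubtypeProd (p := (· = b))).trans (Equiv.uniqueProd _ _))

/-- The fixed locus of `γ` on `A = E²` is `{(x,y) : x = ix}`, i.e.
`{e, t₀} × E` where `t₀ = (1+i)/2` is the unique nonzero `i`-invariant point of
`E`; in particular it is isomorphic to a disjoint union of two copies of `E`. -/
theorem gamma_fixed_locus :
    {p : EC × EC | gammaA p = p} = {p : EC × EC | mulIE p.1 = p.1} ∧
      {p : EC × EC | mulIE p.1 = p.1} =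
        {p : EC × EC | p.1 = piE 0 ∨ p.1 = piE ((1 + Complex.I) / 2)} ∧
      piE ((1 + Complex.I) / 2) ≠ piE 0 ∧
      Nonempty ({p : EC × EC // gammaA p = p} ≃ (EC ⊕ EC)) := by
  have ht₀ : piE ((1 + I) / 2) ≠ piE 0 := by
    rw [Ne, piE_eq_piE_iff, sub_zero]
    exact half_one_add_I_notMem_Lambda
  refine ⟨Set.ext gammaA_eq_self_iff, Set.ext fun p => mulIE_eq_self_iff p.1, ht₀, ?_⟩
  classical
  exact ⟨(Equiv.subtypeEquivRight fun p => (gammaA_eq_self_iff p).trans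
    (mulIE_eq_self_iff p.1)).trans (subtypeFstEqOrEqEquivSum ht₀.symm)⟩
end

section
/- Let G = K ⋊ H be a finite group acting on a set X with K acting freely, let h ∈ H, and suppose x, y ∈ X^{(k,h)} have the same image in X/K, i.e., y = k'·x for some k' ∈ K. Then (k',1) centralizes (k,h) in G. -/
/-- Let `G = K ⋊ H` be a finite group acting on a set `X` with `K` acting freely.
If `x` and `y` are both fixed by `(k, h)` and `y = k'·x` for some `k' ∈ K` (i.e.
`x` and `y` have the same image in `X/K`), then `(k', 1)` centralizes `(k, h)`. -/
theorem translating_element_centralizes {K H X : Type*} [Group K] [Group H]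
    [Finite K] [Finite H] (φ : H →* MulAut K) [MulAction (K ⋊[φ] H) X]
    (hfree : ∀ (k : K) (x : X), (SemidirectProduct.inl k : K ⋊[φ] H) • x = x → k = 1)
    (k k' : K) (h : H) (x y : X)
    (hx : (⟨k, h⟩ : K ⋊[φ] H) • x = x) (hy : (⟨k, h⟩ : K ⋊[φ] H) • y = y)
    (hxy : y = (SemidirectProduct.inl k' : K ⋊[φ] H) • x) :
    (SemidirectProduct.inl k' : K ⋊[φ] H) ∈
      Subgroup.centralizer {(⟨k, h⟩ : K ⋊[φ] H)} := by
  set g : K ⋊[φ] H := ⟨k, h⟩ with hg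
  set a : K ⋊[φ] H := SemidirectProduct.inl k' with ha
  have hfix : ((a * g)⁻¹ * (g * a)) • x = x := by
    have h1 : (g * a) • x = (a * g) • x := by
      rw [mul_smul, mul_smul, ← hxy, hy, hxy, hx]
    rw [mul_smul, h1, ← mul_smul, inv_mul_cancel, one_smul]
  set c : K ⋊[φ] H := (a * g)⁻¹ * (g * a) with hc
  have hcr : c.right = 1 := by
    simp [hc, hg, ha]
  have hcl : c = SemidirectProduct.inl c.left := by
    ext
    · simp
    · simp [hcr]
  have hone : c = 1 := by
    rw [hcl]
    rw [hcl] at hfix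
    rw [hfree c.left x hfix]
    simp
  have : g * a = a * g := by
    have h2 : (a * g)⁻¹ * (g * a) = 1 := hone
    calc g * a = (a * g) * ((a * g)⁻¹ * (g * a)) := by group
      _ = a * g := by rw [h2, mul_one]
  intro z hz
  simp only [Set.mem_singleton_iff] at hz
  subst hz
  exact this
end
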